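/- Let k, ℓ ≥ 0, let π1 ∈ T_k and π2 ∈ T_ℓ (with the convention T_0 = {ε}). Then C1(π1, π2) = π1·(k+ℓ+1)·π2^{+k} is a two-stack sortable permutation of length k+ℓ+1. -/

import Mathlib

/-!
`S` splits a list at its maximum, so as every entry of `π1` lies below every entry of
`π2^{+k}` and both lie below `n = k + ℓ + 1`, `S (C1 π1 π2) = S π1 · (S π2)^{+k} · n`.
A second pass of `S` again fixes `n` at the end and acts separately on the two blocks, since on a
concatenation whose first block lies below the second the maximum, and hence every split, stays
inside one block; `S` also commutes with shifts. So `S (S (C1 π1 π2)) = id_k · (id_ℓ)^{+k} · n`.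
-/

namespace TSP

theorem foldr_max_mem {α : Type} [LinearOrder α] (x : α) (l : List α) :
    l.foldr max x ∈ x :: l := by
  induction l with
  | nil => simp
  | cons a t ih =>
    simp only [List.foldr_cons]
    rcases max_choice a (t.foldr max x) with h | h <;> rw [h]
    · simp
    · rcases List.mem_cons.mp ih with h' | h'
      · rw [h']; simp
      · exact List.mem_cons.mpr (Or.inr (List.mem_cons.mpr (Or.inr h')))

theorem length_takeWhile_lt {α : Type} [DecidableEq α] {m : α} {l : List α}
    (h : m ∈ l) : (l.takeWhile (· ≠ m)).length < l.length := by
  have hd : l.dropWhile (· ≠ m) ≠ [] := by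
    intro hnil
    have := List.dropWhile_eq_nil_iff.mp hnil m h
    simp at this
  have hsum : (l.takeWhile (· ≠ m)).length + (l.dropWhile (· ≠ m)).length = l.length := by
    rw [← List.length_append, List.takeWhile_append_dropWhile]
  have : 0 < (l.dropWhile (· ≠ m)).length := List.length_pos_iff.mpr hd
  omega

theorem length_tail_dropWhile_lt {α : Type} [DecidableEq α] {m : α} {l : List α}
    (h : l ≠ []) : ((l.dropWhile (· ≠ m)).tail).length < l.length := by
  have hsum : (l.takeWhile (· ≠ m)).length + (l.dropWhile (· ≠ m)).length = l.length := by
    rw [← List.length_append, List.takeWhile_append_dropWhile]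
  have h2 : ((l.dropWhile (· ≠ m)).tail).length = (l.dropWhile (· ≠ m)).length - 1 :=
    List.length_tail
  have : 0 < l.length := List.length_pos_iff.mpr h
  omega

/-- The stack-sorting operator `S`: `S(ε) = ε`, and if `A` is nonempty with
largest element `m` and `A = A_L · (m) · A_R`, then `S(A) = S(A_L) · S(A_R) · (m)`. -/
def S {α : Type} [LinearOrder α] : List α → List α
  | [] => []
  | x :: l =>
    let m := l.foldr max x
    S ((x :: l).takeWhile (· ≠ m)) ++ S (((x :: l).dropWhile (· ≠ m)).tail) ++ [m]
termination_by l => l.length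
decreasing_by
  · have hm := foldr_max_mem x l
    rw [← List.foldr_attach] at hm
    exact length_takeWhile_lt hm
  · exact length_tail_dropWhile_lt (by simp)

/-- The identity permutation `id_n = (1, 2, …, n)` as a list. -/
def idPerm (n : ℕ) : List ℕ := List.range' 1 n

/-- `l` is a permutation of `{1, …, n}` (viewed as a sequence). -/
def IsPermOf (n : ℕ) (l : List ℕ) : Prop := l.Perm (idPerm n)

/-- `l` is a two-stack sortable permutation (of `{1, …, len l}`). -/
def Is2SS (l : List ℕ) : Prop := IsPermOf l.length l ∧ S (S l) = idPerm l.length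

/-- `σ^{+k}`: add `k` to every entry. -/
def shift (k : ℕ) (l : List ℕ) : List ℕ := l.map (· + k)

/-- `σ^{+(k1,m,k2)}`: add `k1` to every entry strictly smaller than `m`, `k2` to the others. -/
def shift3 (k1 m k2 : ℕ) (l : List ℕ) : List ℕ :=
  l.map (fun a => if a < m then a + k1 else a + k2)

/-- Standardization `P(A)`: the permutation of `{1,…,len A}` in the same relative order. -/
def stand (l : List ℕ) : List ℕ := l.map (fun a => (l.filter (fun b => b ≤ a)).length)

/-- Avoidance of the pattern 231: no positions `i < j < k` with `l(k) < l(i) < l(j)`. -/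
def Avoids231 (l : List ℕ) : Prop :=
  ¬ ∃ i j k, i < j ∧ j < k ∧ k < l.length ∧
      l.getD k 0 < l.getD i 0 ∧ l.getD i 0 < l.getD j 0

/-- The list of values of the left-to-right maxima of `l`, in order. -/
def lrMaxima (l : List ℕ) : List ℕ :=
  ((List.range l.length).filter
    (fun i => (l.take i).all (fun b => b < l.getD i 0))).map (fun i => l.getD i 0)

/-- `lmax`: the number of left-to-right maxima. -/
def lmax (l : List ℕ) : ℕ :=
  (List.range l.length).countP (fun i => (l.take i).all (fun b => b < l.getD i 0))

/-- `rmax`: the number of right-to-left maxima. -/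
def rmax (l : List ℕ) : ℕ :=
  (List.range l.length).countP (fun i => (l.drop (i+1)).all (fun b => b < l.getD i 0))

/-- `asc`: the number of ascents. -/
def asc (l : List ℕ) : ℕ :=
  (List.range (l.length - 1)).countP (fun i => l.getD i 0 < l.getD (i+1) 0)

/-- `des`: the number of descents. -/
def des (l : List ℕ) : ℕ :=
  (List.range (l.length - 1)).countP (fun i => l.getD (i+1) 0 < l.getD i 0)

/-- `slmax(π)`: the number of left-to-right maxima of `S(π)`. -/
def slmax (l : List ℕ) : ℕ := lmax (S l)

/-- `sldes(π)`: the number of entries `a` that precede `a - 1` in `S(π)`. -/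
def sldes (l : List ℕ) : ℕ :=
  (List.range (S l).length).countP
    (fun i => ((S l).drop (i+1)).any (fun b => b + 1 = (S l).getD i 0))

/-- The construction `C1(π1, π2) = π1 · (k+ℓ+1) · π2^{+k}`. -/
def C1 (p1 p2 : List ℕ) : List ℕ :=
  p1 ++ (p1.length + p2.length + 1) :: shift p1.length p2

/-- The `i`-th left-to-right maximum `a_i` of `S(π2)` (1-indexed). -/
def lrm (p2 : List ℕ) (i : ℕ) : ℕ := (lrMaxima (S p2)).getD (i - 1) 0

/-- The construction `C2(π1, π2, i) = π1^{+(0,k,a_i)} · (k+ℓ+1) · π2^{+(k-1,a_i+1,k)}`. -/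
def C2 (p1 p2 : List ℕ) (i : ℕ) : List ℕ :=
  shift3 0 p1.length (lrm p2 i) p1 ++
    (p1.length + p2.length + 1) :: shift3 (p1.length - 1) (lrm p2 i + 1) p1.length p2

/-- The decomposition `D(π) = (P(π_ℓ), P(π_r))`, where `π = π_ℓ · (n) · π_r`
with `n` the largest entry of `π`. -/
def D (l : List ℕ) : List ℕ × List ℕ :=
  match l with
  | [] => ([], [])
  | x :: t =>
    let m := t.foldr max x
    (stand ((x :: t).takeWhile (· ≠ m)), stand (((x :: t).dropWhile (· ≠ m)).tail))

section StackSort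

variable {α : Type} [LinearOrder α]

theorem S_nil : S ([] : List α) = [] := by rw [S]

theorem le_foldr_max {x : α} {l : List α} : ∀ a ∈ x :: l, a ≤ l.foldr max x := by
  induction l with
  | nil => simp
  | cons b t ih => simp_all

theorem foldr_max_eq_of_mem {x m : α} {l : List α} (hm : m ∈ x :: l)
    (hle : ∀ a ∈ x :: l, a ≤ m) : l.foldr max x = m :=
  le_antisymm (hle _ (foldr_max_mem x l)) (le_foldr_max m hm)

theorem dropWhile_ne_eq_cons {m : α} {l : List α} (h : m ∈ l) :
    l.dropWhile (· ≠ m) = m :: (l.dropWhile (· ≠ m)).tail := by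
  induction l with
  | nil => simp at h
  | cons a t ih =>
    by_cases ha : a = m
    · simp [ha]
    · rw [List.dropWhile_cons, if_pos (by simpa using ha)]
      exact ih ((List.mem_cons.mp h).resolve_left (Ne.symm ha))

theorem S_eq_of_max {l : List α} {m : α} (hm : m ∈ l) (hle : ∀ a ∈ l, a ≤ m) :
    S l = S (l.takeWhile (· ≠ m)) ++ S ((l.dropWhile (· ≠ m)).tail) ++ [m] := by
  cases l with
  | nil => simp at hm
  | cons x t => rw [S, foldr_max_eq_of_mem hm hle]

theorem S_append_cons_of_lt {A B : List α} {m : α} (hA : ∀ a ∈ A, a < m)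
    (hB : ∀ b ∈ B, b < m) : S (A ++ m :: B) = S A ++ S B ++ [m] := by
  have hA' : ∀ a ∈ A, decide (a ≠ m) := fun a ha => by simpa using (hA a ha).ne
  have hle : ∀ a ∈ A ++ m :: B, a ≤ m := by
    intro a ha
    rcases List.mem_append.mp ha with h | h
    · exact (hA a h).le
    · rcases List.mem_cons.mp h with rfl | h
      exacts [le_rfl, (hB a h).le]
  rw [S_eq_of_max (by simp) hle, List.takeWhile_append_of_pos hA',
    List.dropWhile_append_of_pos hA']
  simp

theorem S_append_of_lt : ∀ {A B : List α}, (∀ a ∈ A, ∀ b ∈ B, a < b) → S (A ++ B) = S A ++ S B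
  | A, [], _ => by simp [S_nil]
  | A, y :: t, h => by
    set M := t.foldr max y
    have hM : M ∈ y :: t := foldr_max_mem y t
    have hA : ∀ a ∈ A, decide (a ≠ M) := fun a ha => by simpa using (h a ha M hM).ne
    have hle : ∀ a ∈ A ++ y :: t, a ≤ M := by
      intro a ha
      rcases List.mem_append.mp ha with ha | ha
      exacts [(h a ha M hM).le, le_foldr_max a ha]
    have hrec := S_append_of_lt (A := A) (B := (y :: t).takeWhile (· ≠ M))
      fun a ha b hb => h a ha b (List.takeWhile_subset _ hb)
    rw [S_eq_of_max (List.mem_append_right A hM) hle, List.takeWhile_append_of_pos hA,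
      List.dropWhile_append_of_pos hA, hrec, S_eq_of_max hM le_foldr_max]
    simp
termination_by _ B => B.length
decreasing_by exact length_takeWhile_lt hM

theorem S_map_of_strictMono {β : Type} [LinearOrder β] {f : α → β} (hf : StrictMono f) :
    ∀ l : List α, S (l.map f) = (S l).map f
  | [] => by simp [S_nil]
  | x :: t => by
    set M := t.foldr max x
    have hM : M ∈ x :: t := foldr_max_mem x t
    have hle : ∀ b ∈ (x :: t).map f, b ≤ f M := by
      simp only [List.mem_map]
      rintro _ ⟨a, ha, rfl⟩
      exact hf.monotone (le_foldr_max a ha)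
    have hpred : (fun b => decide (b ≠ f M)) ∘ f = (· ≠ M) := by
      funext a
      simp [hf.injective.eq_iff]
    rw [S_eq_of_max (List.mem_map_of_mem hM) hle, List.takeWhile_map, List.dropWhile_map, hpred,
      ← List.map_tail, S_map_of_strictMono hf, S_map_of_strictMono hf, S_eq_of_max hM le_foldr_max]
    simp
termination_by l => l.length
decreasing_by
  · exact length_takeWhile_lt hM
  · exact length_tail_dropWhile_lt (by simp)

theorem S_perm : ∀ l : List α, (S l).Perm l
  | [] => by rw [S_nil]
  | x :: t => by
    set M := t.foldr max x
    have hM : M ∈ x :: t := foldr_max_mem x t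
    rw [S_eq_of_max hM le_foldr_max]
    refine (((S_perm _).append (S_perm _)).append_right _).trans ?_
    rw [List.append_assoc]
    refine (List.Perm.append_left _ (List.perm_append_singleton _ _)).trans ?_
    rw [← dropWhile_ne_eq_cons hM, List.takeWhile_append_dropWhile]
termination_by l => l.length
decreasing_by
  · exact length_takeWhile_lt hM
  · exact length_tail_dropWhile_lt (by simp)

theorem S_S_append_cons_of_lt {A B : List α} {m : α} (hAB : ∀ a ∈ A, ∀ b ∈ B, a < b)
    (hA : ∀ a ∈ A, a < m) (hB : ∀ b ∈ B, b < m) :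
    S (S (A ++ m :: B)) = S (S A) ++ S (S B) ++ [m] := by
  have hSA : ∀ a ∈ S A, a < m := fun a ha => hA a ((S_perm A).subset ha)
  have hSB : ∀ b ∈ S B, b < m := fun b hb => hB b ((S_perm B).subset hb)
  have hSAB : ∀ a ∈ S A ++ S B, a < m := fun a ha => (List.mem_append.mp ha).elim (hSA a) (hSB a)
  rw [S_append_cons_of_lt hA hB, ← List.append_nil (S A ++ S B ++ [m]), List.append_assoc,
    List.singleton_append, S_append_cons_of_lt hSAB (by simp), S_nil, List.append_nil,
    S_append_of_lt fun a ha b hb => hAB a ((S_perm A).subset ha) b ((S_perm B).subset hb)]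

end StackSort

theorem mem_idPerm {a n : ℕ} : a ∈ idPerm n ↔ 1 ≤ a ∧ a ≤ n := by
  simp only [idPerm, List.mem_range'_1]
  omega

theorem S_shift (k : ℕ) (l : List ℕ) : S (shift k l) = shift k (S l) :=
  S_map_of_strictMono (strictMono_id.add_const k) l

theorem idPerm_add_add_one (k ℓ : ℕ) :
    idPerm (k + ℓ + 1) = idPerm k ++ shift k (idPerm ℓ) ++ [k + ℓ + 1] := by
  have hshift : shift k (idPerm ℓ) = List.range' (k + 1) ℓ := by
    simp only [shift, idPerm, List.map_add_range', Nat.add_comm]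
  rw [hshift, idPerm, idPerm, List.range'_1_concat, Nat.add_comm k 1, List.range'_append_1,
    Nat.add_comm 1, Nat.add_assoc]

/-- For `k, ℓ ≥ 0`, `π1 ∈ T_k` and `π2 ∈ T_ℓ` (with `T_0 = {ε}`),
`C1(π1, π2)` is a two-stack sortable permutation of length `k + ℓ + 1`. -/
theorem C1_valid (k ℓ : ℕ) (π1 π2 : List ℕ)
    (h1 : π1.length = k) (h1' : Is2SS π1) (h2 : π2.length = ℓ) (h2' : Is2SS π2) :
    (C1 π1 π2).length = k + ℓ + 1 ∧ Is2SS (C1 π1 π2) := by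
  subst h1 h2
  have hlen : (C1 π1 π2).length = π1.length + π2.length + 1 := by
    simp only [C1, shift, List.length_append, List.length_cons, List.length_map]
    omega
  have hA (a : ℕ) (ha : a ∈ π1) : a ≤ π1.length := (mem_idPerm.mp (h1'.1.subset ha)).2
  have hB (b : ℕ) (hb : b ∈ shift π1.length π2) :
      π1.length < b ∧ b ≤ π1.length + π2.length := by
    obtain ⟨c, hc, rfl⟩ := List.mem_map.mp hb
    have := mem_idPerm.mp (h2'.1.subset hc)
    omega
  have hAB (a : ℕ) (ha : a ∈ π1) (b : ℕ) (hb : b ∈ shift π1.length π2) : a < b :=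
    (hA a ha).trans_lt (hB b hb).1
  refine ⟨hlen, ?_, ?_⟩ <;> rw [hlen]
  · rw [IsPermOf, idPerm_add_add_one, List.append_assoc]
    exact h1'.1.append (((h2'.1.map _).cons _).trans (List.perm_append_singleton _ _).symm)
  · rw [idPerm_add_add_one, C1, S_S_append_cons_of_lt hAB (fun a ha => by linarith [hA a ha])
      (fun b hb => by linarith [hB b hb]), S_shift, S_shift, h1'.2, h2'.2]

end TSP
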